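/- arXiv:1807.10907 — 9 statements merged into one kernel-verified Lean document; each statement's English description precedes it below -/
import Mathlib

section
/- Let n ≥ 3, k ≥ 7 with gcd(n,k) = 1. Then in the submonoid T = ⟨k, k+n, kn−(k+n)⟩ of ℕ, the element k+n is an atom, i.e., k+n cannot be written as a sum of two nonzero elements of T. -/
/-- `a` is an atom of the additive submonoid `T` of `ℕ`: a nonzero element of `T`
that is not a sum of two nonzero elements of `T`. -/
def NumAtom (T : AddSubmonoid ℕ) (a : ℕ) : Prop :=
  a ∈ T ∧ a ≠ 0 ∧ ¬ ∃ b c : ℕ, b ∈ T ∧ c ∈ T ∧ b ≠ 0 ∧ c ≠ 0 ∧ a = b + c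

/-- `AS T x` is the set of lengths of factorizations of `x` into atoms of `T`:
the set of `m : ℕ` such that `x` is a sum of `m` atoms of `T`. -/
def AS (T : AddSubmonoid ℕ) (x : ℕ) : Set ℕ :=
  { m | ∃ s : Multiset ℕ, (∀ a ∈ s, NumAtom T a) ∧ Multiset.card s = m ∧ s.sum = x }

/-- An element of `closure S` below `N` is a sum of generators below `N`. -/
lemma dvd_of_mem_closure_of_lt {S : Set ℕ} {d N x : ℕ} (hS : ∀ s ∈ S, s < N → d ∣ s)
    (hx : x ∈ AddSubmonoid.closure S) (hxN : x < N) : d ∣ x := by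
  induction hx using AddSubmonoid.closure_induction with
  | mem s hs => exact hS s hs hxN
  | zero => exact dvd_zero d
  | add y z _ _ ihy ihz => exact dvd_add (ihy (by omega)) (ihz (by omega))

theorem stmt_4 (n k : ℕ) (hn : 3 ≤ n) (hk : 7 ≤ k) (hgcd : Nat.gcd n k = 1) :
    NumAtom (AddSubmonoid.closure {k, k + n, k * n - (k + n)}) (k + n) := by
  have hM : 2 * (k + n) ≤ k * n := by nlinarith
  have hsmall : ∀ s ∈ ({k, k + n, k * n - (k + n)} : Set ℕ), s < k + n → k ∣ s := by
    simp only [Set.mem_insert_iff, Set.mem_singleton_iff]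
    rintro s (rfl | rfl | rfl) hs <;> first | exact dvd_rfl | omega
  refine ⟨AddSubmonoid.subset_closure (by simp), by omega, ?_⟩
  rintro ⟨b, c, hb, hc, hb0, hc0, hsum⟩
  have hkb : k ∣ b := dvd_of_mem_closure_of_lt hsmall hb (by omega)
  have hkc : k ∣ c := dvd_of_mem_closure_of_lt hsmall hc (by omega)
  have hkn : k ∣ n := (Nat.dvd_add_right dvd_rfl).mp (hsum ▸ dvd_add hkb hkc)
  have : k = 1 := Nat.Coprime.eq_one_of_dvd (Nat.Coprime.symm hgcd) hkn
  omega
end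

section
/- Let n ≥ 3, k ≥ 7 with gcd(n,k) = 1. Then in the submonoid T = ⟨k, k+n, kn−(k+n)⟩ of ℕ, the element kn−(k+n) is an atom; in particular there are no λ, μ ∈ ℕ with kn−(k+n) = λk + μ(k+n). -/
namespace AddSubmonoid

lemma mem_closure_of_mem_closure_union_singleton_of_lt {S : Set ℕ} {b c : ℕ}
    (hb : b ∈ closure (S ∪ {c})) (hbc : b < c) : b ∈ closure S := by
  rw [closure_union, mem_sup] at hb
  obtain ⟨y, hy, z, hz, rfl⟩ := hb
  obtain ⟨j, rfl⟩ := mem_closure_singleton.mp hz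
  rcases j with _ | j
  · simpa using hy
  · rw [succ_nsmul] at hbc
    omega

lemma numAtom_closure_union_singleton {S : Set ℕ} {c : ℕ} (hc : c ≠ 0)
    (hcS : c ∉ closure S) : NumAtom (closure (S ∪ {c})) c := by
  refine ⟨subset_closure (Or.inr rfl), hc, ?_⟩
  rintro ⟨b, d, hb, hd, hb0, hd0, rfl⟩
  have hbS := mem_closure_of_mem_closure_union_singleton_of_lt hb (by omega)
  have hdS := mem_closure_of_mem_closure_union_singleton_of_lt hd (by omega)
  exact hcS (add_mem hbS hdS)

lemma closure_pair_add_le (k n : ℕ) : closure {k, k + n} ≤ closure {k, n} := by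
  have hk : k ∈ closure {k, n} := subset_closure (Set.mem_insert k _)
  have hn : n ∈ closure {k, n} := subset_closure (Set.mem_insert_of_mem k rfl)
  exact closure_le.mpr <|
    Set.insert_subset_iff.mpr ⟨hk, Set.singleton_subset_iff.mpr (add_mem hk hn)⟩

end AddSubmonoid

theorem stmt_5 (n k : ℕ) (hn : 3 ≤ n) (hk : 7 ≤ k) (hgcd : Nat.gcd n k = 1) :
    NumAtom (AddSubmonoid.closure {k, k + n, k * n - (k + n)}) (k * n - (k + n)) ∧
      ¬ ∃ l m : ℕ, k * n - (k + n) = l * k + m * (k + n) := by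
  have hc : k * n - (k + n) ≠ 0 := by
    have : k + n < k * n := by nlinarith
    omega
  have hkn : k * n - (k + n) ∉ AddSubmonoid.closure {k, n} := by
    simpa only [Nat.sub_sub, Set.mem_ofPred_eq] using
      (frobeniusNumber_pair (Nat.coprime_comm.mp hgcd) (by omega) (by omega)).1
  have hkkn : k * n - (k + n) ∉ AddSubmonoid.closure {k, k + n} :=
    fun h => hkn (AddSubmonoid.closure_pair_add_le k n h)
  have hset : ({k, k + n, k * n - (k + n)} : Set ℕ) = {k, k + n} ∪ {k * n - (k + n)} := by
    simp only [Set.insert_union, Set.singleton_union]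
  refine ⟨hset ▸ AddSubmonoid.numAtom_closure_union_singleton hc hkkn, ?_⟩
  rintro ⟨l, m, h⟩
  exact hkkn ((AddSubmonoid.mem_closure_pair _ _ _).mpr ⟨l, m, by simp [h]⟩)
end

section
/- Let n ≥ 3, k ≥ 7 with gcd(n,k) = 1, and let T = ⟨k, k+n, kn−(k+n)⟩. If α, β, γ ∈ ℕ satisfy αk + β(k+n) + γ(kn−(k+n)) = kn, then (α,β,γ) = (0,1,1) or (α,β,γ) = (n,0,0). Consequently the set of lengths of factorizations of kn into atoms of T equals {2, n}. -/
/-!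
Write `c = k n - (k + n)`. Since `k n > 2 (k + n)`, we have `2 c > k n`, so in
`k n = α k + β (k + n) + γ c` we get `γ ≤ 1`. If `γ = 0`, then `k ∣ β n`, hence `k ∣ β`,
and `β (k + n) ≤ k n` forces `β = 0`, `α = n`. If `γ = 1`, then `α k + β (k + n) = k + n` and
`k ∤ n` forces `(α, β) = (0, 1)`. Each generator is an atom because it is not a combination
of the smaller ones, so the factorizations of `k n` are exactly these two triples.
-/

open Set

namespace AddSubmonoid

theorem eq_zero_or_mem_or_exists_add_of_mem_closure {M : Type*} [AddMonoid M] {S : Set M} {x : M}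
    (hx : x ∈ closure S) :
    x = 0 ∨ x ∈ S ∨
      ∃ b c : M, b ∈ closure S ∧ c ∈ closure S ∧ b ≠ 0 ∧ c ≠ 0 ∧ x = b + c := by
  induction hx using closure_induction with
  | mem y hy => exact .inr (.inl hy)
  | zero => exact .inl rfl
  | add y z hy hz ihy ihz =>
    rcases eq_or_ne y 0 with rfl | hy0
    · simpa using ihz
    rcases eq_or_ne z 0 with rfl | hz0
    · simpa using ihy
    exact .inr (.inr ⟨y, z, hy, hz, hy0, hz0, rfl⟩)

variable {S : Set ℕ} {x : ℕ}

theorem mem_closure_inter_Iic (hx : x ∈ closure S) : x ∈ closure (S ∩ Iic x) := by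
  induction hx using closure_induction with
  | mem y hy => exact subset_closure ⟨hy, mem_Iic.2 le_rfl⟩
  | zero => exact zero_mem _
  | add y z _ _ hy hz =>
    refine add_mem (closure_mono ?_ hy) (closure_mono ?_ hz) <;>
      exact inter_subset_inter_right _ (Iic_subset_Iic.2 (by omega))

theorem _root_.NumAtom.mem_of_closure (h : NumAtom (closure S) x) : x ∈ S := by
  obtain ⟨hx, hx0, hirr⟩ := h
  rcases eq_zero_or_mem_or_exists_add_of_mem_closure hx with h | h | h
  exacts [absurd h hx0, h, absurd h hirr]

theorem _root_.numAtom_closure_of_notMem (hxS : x ∈ S) (hx0 : x ≠ 0)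
    (hx : x ∉ closure {s ∈ S | s < x}) : NumAtom (closure S) x := by
  refine ⟨subset_closure hxS, hx0, ?_⟩
  rintro ⟨b, c, hb, hc, hb0, hc0, rfl⟩
  have hsmall : ∀ y ∈ closure S, y < b + c → y ∈ closure {s ∈ S | s < b + c} :=
    fun y hy hlt => closure_mono (inter_subset_inter_right _ (Iic_subset_Iio.2 hlt))
      (mem_closure_inter_Iic hy)
  exact hx (add_mem (hsmall b hb (by omega)) (hsmall c hc (by omega)))

theorem _root_.numAtom_closure_of_forall_le (hxS : x ∈ S) (hx0 : x ≠ 0) (hmin : ∀ s ∈ S, x ≤ s) :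
    NumAtom (closure S) x := by
  refine numAtom_closure_of_notMem hxS hx0 ?_
  have : {s ∈ S | s < x} = ∅ := eq_empty_of_forall_notMem fun s hs => by
    have := hmin s hs.1
    have := hs.2
    omega
  simpa [this] using hx0

end AddSubmonoid

theorem AS_closure_triple {a b c : ℕ} (hab : a ≠ b) (hac : a ≠ c) (hbc : b ≠ c)
    (ha : NumAtom (AddSubmonoid.closure {a, b, c}) a)
    (hb : NumAtom (AddSubmonoid.closure {a, b, c}) b)
    (hc : NumAtom (AddSubmonoid.closure {a, b, c}) c) (x : ℕ) :
    AS (AddSubmonoid.closure {a, b, c}) x =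
      {m | ∃ α β γ : ℕ, α * a + β * b + γ * c = x ∧ α + β + γ = m} := by
  ext m
  constructor
  · rintro ⟨s, hs, rfl, rfl⟩
    have hsub : ∀ y ∈ s, y ∈ ({a, b, c} : Finset ℕ) := fun y hy => by
      simpa using (hs y hy).mem_of_closure
    refine ⟨s.count a, s.count b, s.count c, ?_, ?_⟩
    · rw [Finset.sum_multiset_count_of_subset s {a, b, c}
        fun y hy => hsub y (Multiset.mem_toFinset.1 hy)]
      simp [hab, hac, hbc, add_assoc]
    · rw [← Multiset.sum_count_eq_card hsub]
      simp [hab, hac, hbc, add_assoc]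
  · rintro ⟨α, β, γ, rfl, rfl⟩
    refine ⟨.replicate α a + .replicate β b + .replicate γ c, ?_, by simp,
      by simp [mul_comm]⟩
    intro y hy
    simp only [Multiset.mem_add, Multiset.mem_replicate] at hy
    rcases hy with (⟨-, rfl⟩ | ⟨-, rfl⟩) | ⟨-, rfl⟩
    exacts [ha, hb, hc]

section ThreeGenerators

variable {n k c α β : ℕ}

theorem eq_and_eq_zero_of_mul_add_mul_eq_mul (hk : 0 < k) (hcop : Nat.Coprime k n)
    (h : α * k + β * (k + n) = k * n) : α = n ∧ β = 0 := by
  have hdvd : k ∣ β * n := by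
    refine (Nat.dvd_add_right (dvd_mul_right k (α + β))).1 ?_
    rw [show k * (α + β) + β * n = k * n by linarith]
    exact dvd_mul_right k n
  obtain ⟨t, rfl⟩ := hcop.dvd_of_dvd_mul_right hdvd
  obtain rfl : t = 0 := by
    by_contra ht
    have : k * (k + n) ≤ k * t * (k + n) :=
      Nat.mul_le_mul_right _ (Nat.le_mul_of_pos_right k (Nat.pos_of_ne_zero ht))
    nlinarith [mul_pos hk hk]
  simp only [mul_zero, zero_mul, add_zero] at h
  exact ⟨Nat.eq_of_mul_eq_mul_right hk (h.trans (mul_comm k n)), rfl⟩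

theorem eq_zero_and_eq_one_of_mul_add_mul_eq (hk : 0 < k) (hkn : ¬ k ∣ n)
    (h : α * k + β * (k + n) = k + n) : α = 0 ∧ β = 1 := by
  have hβ : β < 2 := by
    by_contra hβ
    nlinarith
  interval_cases β
  · exact absurd ((Nat.dvd_add_right (dvd_refl k)).1 ⟨α, by linarith⟩) hkn
  · exact ⟨by simpa [hk.ne'] using h, rfl⟩

theorem eq_of_mul_add_mul_add_mul_eq_mul (hk : 0 < k) (hcop : Nat.Coprime k n) (hkn : ¬ k ∣ n)
    (hc : c + (k + n) = k * n) (hc2 : k * n < 2 * c) {γ : ℕ}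
    (h : α * k + β * (k + n) + γ * c = k * n) :
    (α, β, γ) = (0, 1, 1) ∨ (α, β, γ) = (n, 0, 0) := by
  have hγ : γ < 2 := by
    by_contra hγ
    nlinarith
  interval_cases γ
  · obtain ⟨rfl, rfl⟩ := eq_and_eq_zero_of_mul_add_mul_eq_mul hk hcop (by simpa using h)
    exact .inr rfl
  · obtain ⟨rfl, rfl⟩ :=
      eq_zero_and_eq_one_of_mul_add_mul_eq (α := α) (β := β) hk hkn (by linarith)
    exact .inl rfl

theorem numAtom_closure_triple_add_of_not_dvd (hkn : ¬ k ∣ n) (hc : k + n < c) :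
    NumAtom (AddSubmonoid.closure {k, k + n, c}) (k + n) := by
  have hn : n ≠ 0 := by
    rintro rfl
    exact hkn (dvd_zero k)
  refine numAtom_closure_of_notMem (by simp) (by omega) ?_
  have : {s ∈ ({k, k + n, c} : Set ℕ) | s < k + n} = {k} := by
    ext s
    simp only [mem_ofPred_eq, mem_insert_iff, mem_singleton_iff]
    omega
  rw [this, AddSubmonoid.mem_closure_singleton]
  rintro ⟨m, hm⟩
  exact hkn ((Nat.dvd_add_right (dvd_refl k)).1 ⟨m, by simpa [mul_comm] using hm.symm⟩)

-- If `c` were a combination of `k` and `k + n`, so would be `k * n = c + (k + n)`, with `k + n`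
-- occurring in it.
theorem numAtom_closure_triple_of_add_eq_mul (hk : 0 < k) (hcop : Nat.Coprime k n)
    (hc : c + (k + n) = k * n) (hkc : k + n < c) :
    NumAtom (AddSubmonoid.closure {k, k + n, c}) c := by
  refine numAtom_closure_of_notMem (by simp) (by omega) ?_
  have : {s ∈ ({k, k + n, c} : Set ℕ) | s < c} = {k, k + n} := by
    ext s
    simp only [mem_ofPred_eq, mem_insert_iff, mem_singleton_iff]
    omega
  rw [this, AddSubmonoid.mem_closure_pair]
  rintro ⟨a, b, hab⟩
  have := (eq_and_eq_zero_of_mul_add_mul_eq_mul (α := a) (β := b + 1) hk hcop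
    (by rw [← hc, ← hab, smul_eq_mul, smul_eq_mul]; ring)).2
  omega

end ThreeGenerators

theorem stmt_7 (n k : ℕ) (hn : 3 ≤ n) (hk : 7 ≤ k) (hgcd : Nat.gcd n k = 1) :
    (∀ α β γ : ℕ, α * k + β * (k + n) + γ * (k * n - (k + n)) = k * n →
      (α, β, γ) = (0, 1, 1) ∨ (α, β, γ) = (n, 0, 0)) ∧
    AS (AddSubmonoid.closure {k, k + n, k * n - (k + n)}) (k * n) = {2, n} := by
  have hkn : 2 * (k + n) < k * n := by nlinarith
  have hcop : Nat.Coprime k n := Nat.coprime_comm.1 hgcd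
  have hndvd : ¬ k ∣ n := fun h => by
    have := hcop.eq_one_of_dvd h
    omega
  set c := k * n - (k + n)
  have hc : c + (k + n) = k * n := by omega
  have hrep : ∀ α β γ : ℕ, α * k + β * (k + n) + γ * c = k * n →
      (α, β, γ) = (0, 1, 1) ∨ (α, β, γ) = (n, 0, 0) := fun _ _ _ =>
    eq_of_mul_add_mul_add_mul_eq_mul (by omega) hcop hndvd hc (by omega)
  refine ⟨hrep, ?_⟩
  rw [AS_closure_triple (by omega) (by omega) (by omega)
    (numAtom_closure_of_forall_le (by simp) (by omega) (by simp; omega))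
    (numAtom_closure_triple_add_of_not_dvd hndvd (by omega))
    (numAtom_closure_triple_of_add_eq_mul (by omega) hcop hc (by omega))]
  ext m
  simp only [mem_ofPred_eq, mem_insert_iff, mem_singleton_iff]
  constructor
  · rintro ⟨α, β, γ, h, rfl⟩
    rcases hrep α β γ h with h | h <;> simp only [Prod.mk.injEq] at h <;> omega
  · rintro (rfl | rfl)
    · exact ⟨0, 1, 1, by omega, rfl⟩
    · exact ⟨m, 0, 0, by ring, by simp⟩
end

section
/- For every two-element set Σ = {2, n} with n ≥ 3, there exists a numerical semigroup T and an element x ∈ T such that the set of lengths of factorizations of x into atoms of T equals Σ. Concretely, T = ⟨7, 7+n, 7n−(7+n)⟩ works when gcd(n,7) = 1 (and more generally T = ⟨k, k+n, kn−(k+n)⟩ for any k ≥ 7 coprime to n), with x = kn. -/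
theorem AddSubmonoid.mem_closure_triple {a b c m : ℕ} :
    m ∈ closure ({a, b, c} : Set ℕ) ↔ ∃ x y z : ℕ, x * a + y * b + z * c = m := by
  rw [← Set.singleton_union, closure_union, mem_sup]
  simp only [mem_closure_singleton, mem_closure_pair, smul_eq_mul]
  constructor
  · rintro ⟨_, ⟨x, rfl⟩, _, ⟨y, z, rfl⟩, rfl⟩
    exact ⟨x, y, z, by ring⟩
  · rintro ⟨x, y, z, rfl⟩
    exact ⟨_, ⟨x, rfl⟩, _, ⟨y, z, rfl⟩, by ring⟩

theorem mem_of_numAtom_closure {S : Set ℕ} {a : ℕ} (ha : NumAtom (AddSubmonoid.closure S) a) :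
    a ∈ S := by
  obtain ⟨haT, ha0, hirr⟩ := ha
  suffices ∀ m ∈ AddSubmonoid.closure S, m = 0 ∨ m ∈ S ∨ ∃ b c : ℕ, b ∈ AddSubmonoid.closure S ∧
      c ∈ AddSubmonoid.closure S ∧ b ≠ 0 ∧ c ≠ 0 ∧ m = b + c by
    rcases this a haT with h | h | h
    exacts [absurd h ha0, h, absurd h hirr]
  intro m hm
  induction hm using AddSubmonoid.closure_induction with
  | mem m hm => exact .inr (.inl hm)
  | zero => exact .inl rfl
  | add u v hu hv ihu ihv =>
    rcases eq_or_ne u 0 with rfl | hu0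
    · simpa using ihv
    rcases eq_or_ne v 0 with rfl | hv0
    · simpa using ihu
    exact .inr (.inr ⟨u, v, hu, hv, hu0, hv0, rfl⟩)

theorem Multiset.exists_card_eq_sum_eq_of_forall_mem_triple {a b c : ℕ} (s : Multiset ℕ)
    (hs : ∀ m ∈ s, m = a ∨ m = b ∨ m = c) :
    ∃ x y z : ℕ, x + y + z = card s ∧ x * a + y * b + z * c = s.sum := by
  induction s using Multiset.induction with
  | empty => exact ⟨0, 0, 0, by simp, by simp⟩
  | cons m s ih =>
    obtain ⟨x, y, z, hcard, hsum⟩ := ih fun m' hm' => hs m' (mem_cons_of_mem hm')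
    simp only [card_cons, sum_cons, ← hcard, ← hsum]
    rcases hs m (mem_cons_self _ _) with rfl | rfl | rfl
    · exact ⟨x + 1, y, z, by ring, by ring⟩
    · exact ⟨x, y + 1, z, by ring, by ring⟩
    · exact ⟨x, y, z + 1, by ring, by ring⟩

theorem numAtom_closure_triple_of_forall_eq {a b c g : ℕ}
    (hg : g ∈ AddSubmonoid.closure ({a, b, c} : Set ℕ)) (hg0 : g ≠ 0)
    (h : ∀ x y z : ℕ, x * a + y * b + z * c = g → x + y + z < 2) :
    NumAtom (AddSubmonoid.closure {a, b, c}) g := by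
  have length_ne_zero {x y z : ℕ} (h : x * a + y * b + z * c ≠ 0) : x + y + z ≠ 0 := by
    intro h0
    simp [show x = 0 by omega, show y = 0 by omega, show z = 0 by omega] at h
  refine ⟨hg, hg0, ?_⟩
  rintro ⟨u, v, hu, hv, hu0, hv0, rfl⟩
  obtain ⟨x, y, z, rfl⟩ := AddSubmonoid.mem_closure_triple.mp hu
  obtain ⟨x', y', z', rfl⟩ := AddSubmonoid.mem_closure_triple.mp hv
  have := h (x + x') (y + y') (z + z') (by ring)
  have := length_ne_zero hu0
  have := length_ne_zero hv0
  omega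

theorem finite_compl_closure_of_coprime {S : Set ℕ} {a b : ℕ} (hab : a.Coprime b) (ha : 1 < a)
    (hb : 1 < b) (hS : {a, b} ⊆ S) : {m | m ∉ AddSubmonoid.closure S}.Finite :=
  (frobeniusNumber_pair hab ha hb).bddAbove.finite.subset
    fun _ hm => mt (AddSubmonoid.closure_mono hS ·) hm

theorem coeffs_of_mul_add_mul_add_mul_eq_mul {k n c x y z : ℕ} (hkn : k.Coprime n)
    (hc : k + n + c = k * n) (hnc : n < c) (h : x * k + y * (k + n) + z * c = k * n) :
    x = n ∧ y = 0 ∧ z = 0 ∨ x = 0 ∧ y = 1 ∧ z = 1 := by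
  have hk : 0 < k := by nlinarith
  have hyk : y < k := by nlinarith
  have hzk : z < k := by nlinarith
  have hyz : y = z := by
    have hdvd : (k : ℤ) ∣ ((z : ℤ) - y) * n := ⟨x + y + z * n - z - n, by
      have h' := congrArg (Nat.cast (R := ℤ)) h
      have hc' := congrArg (Nat.cast (R := ℤ)) hc
      push_cast at h' hc'
      linear_combination z * hc' - h'⟩
    have := Int.eq_zero_of_abs_lt_dvd
      ((Nat.isCoprime_iff_coprime.mpr hkn).dvd_of_dvd_mul_right hdvd) (by rw [abs_lt]; omega)
    omega
  subst hyz
  have : x * k + y * (k * n) = k * n :=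
    calc x * k + y * (k * n) = x * k + y * (k + n) + y * c := by rw [← hc]; ring
      _ = k * n := h
  have : y ≤ 1 := by nlinarith
  interval_cases y
  · exact .inl ⟨by nlinarith, rfl, rfl⟩
  · exact .inr ⟨by nlinarith, rfl, rfl⟩

theorem numAtom_closure_triple {k n c : ℕ} (hkn : k.Coprime n) (hc : k + n + c = k * n)
    (hnc : n < c) :
    ∀ g ∈ ({k, k + n, c} : Set ℕ), NumAtom (AddSubmonoid.closure {k, k + n, c}) g := by
  have hk : 0 < k := by nlinarith
  have hn : 1 < n := by nlinarith
  rintro g (hg | hg | hg) <;> subst g <;>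
    refine numAtom_closure_triple_of_forall_eq (AddSubmonoid.subset_closure (by simp)) (by omega)
      fun x y z h => ?_
  · obtain ⟨m, rfl⟩ : ∃ m, n = m + 1 := ⟨n - 1, by omega⟩
    have := coeffs_of_mul_add_mul_add_mul_eq_mul hkn hc hnc
      (show (x + m) * k + y * (k + (m + 1)) + z * c = k * (m + 1) by linear_combination h)
    omega
  · have := coeffs_of_mul_add_mul_add_mul_eq_mul hkn hc hnc
      (show x * k + y * (k + n) + (z + 1) * c = k * n by linear_combination h + hc)
    omega
  · have := coeffs_of_mul_add_mul_add_mul_eq_mul hkn hc hnc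
      (show x * k + (y + 1) * (k + n) + z * c = k * n by linear_combination h + hc)
    omega

theorem AS_closure_triple_mul {k n c : ℕ} (hkn : k.Coprime n) (hc : k + n + c = k * n)
    (hnc : n < c) : AS (AddSubmonoid.closure {k, k + n, c}) (k * n) = {2, n} := by
  have hatom := numAtom_closure_triple hkn hc hnc
  ext m
  constructor
  · rintro ⟨s, hs, rfl, hsum⟩
    obtain ⟨x, y, z, hcard, hxyz⟩ :=
      s.exists_card_eq_sum_eq_of_forall_mem_triple fun a ha => mem_of_numAtom_closure (hs a ha)
    have := coeffs_of_mul_add_mul_add_mul_eq_mul hkn hc hnc (hxyz.trans hsum)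
    simp only [Set.mem_insert_iff, Set.mem_singleton_iff]
    omega
  · rintro (rfl | rfl)
    · refine ⟨{k + n, c}, ?_, rfl, by simp [← hc]⟩
      simpa using ⟨hatom _ (by simp), hatom _ (by simp)⟩
    · refine ⟨Multiset.replicate m k, ?_, by simp, by simp [mul_comm]⟩
      simpa using fun a ha => Multiset.eq_of_mem_replicate ha ▸ hatom k (by simp)

theorem finite_compl_and_mul_mem_and_AS_mul {k n c : ℕ} (hkn : k.Coprime n)
    (hc : k + n + c = k * n) (hnc : n < c) :
    {m | m ∉ AddSubmonoid.closure {k, k + n, c}}.Finite ∧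
      k * n ∈ AddSubmonoid.closure {k, k + n, c} ∧
      AS (AddSubmonoid.closure {k, k + n, c}) (k * n) = {2, n} := by
  have hk : 1 < k := by nlinarith
  refine ⟨finite_compl_closure_of_coprime (Nat.coprime_self_add_right.mpr hkn) hk (by omega)
      (Set.insert_subset_insert (by simp)), ?_, AS_closure_triple_mul hkn hc hnc⟩
  exact AddSubmonoid.mem_closure_triple.mpr ⟨0, 1, 1, by simpa using hc⟩

theorem stmt_8 (n : ℕ) (hn : 3 ≤ n) :
    (∃ T : AddSubmonoid ℕ, (Set.Finite {m : ℕ | m ∉ T}) ∧ ∃ x ∈ T, AS T x = {2, n}) ∧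
      ∀ k : ℕ, 7 ≤ k → Nat.gcd n k = 1 →
        (Set.Finite {m : ℕ | m ∉ AddSubmonoid.closure {k, k + n, k * n - (k + n)}}) ∧
          k * n ∈ AddSubmonoid.closure {k, k + n, k * n - (k + n)} ∧
          AS (AddSubmonoid.closure {k, k + n, k * n - (k + n)}) (k * n) = {2, n} := by
  have semigroup (k : ℕ) (hk : 7 ≤ k) (hnk : n.gcd k = 1) := by
    have : k + 2 * n < k * n := by nlinarith
    exact finite_compl_and_mul_mem_and_AS_mul (Nat.coprime_comm.mp hnk)
      (c := k * n - (k + n)) (by omega) (by omega)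
  obtain ⟨hfin, hmem, hAS⟩ := semigroup (7 * n + 1) (by omega) (by simp)
  exact ⟨⟨_, hfin, _, hmem, hAS⟩, semigroup⟩
end

section
/- Let n ≥ 3 and t ≥ n+1. Then in the submonoid T = ⟨tn², tn²+n, t²n+1, t²n+n+1, t²n²−t²n−1⟩ of ℕ, the element t²n+1 is an atom; in particular there are no α, β ∈ ℕ with t²n+1 = α·tn² + β·(tn²+n). -/
/-!
Every generator of `T` below `g = t²n + 1` is a multiple of `n` (namely `tn²` and `tn² + n`; the
generator `t²n² - t²n - 1` is at least `g` once `t ≥ 1`, and vanishes for `t = 0`). An element of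
`T` below `g` is a sum of such generators, hence a multiple of `n`, while `g ≡ 1 [MOD n]`. So `g`
is neither a sum of two smaller nonzero elements of `T` nor a combination of `tn²` and `tn² + n`.
-/

namespace AddSubmonoid

theorem mem_closure_inter_Iio {M : Type*} [AddCommMonoid M] [PartialOrder M]
    [CanonicallyOrderedAdd M] {S : Set M} {m x : M} (hx : x ∈ closure S) (hxm : x < m) :
    x ∈ closure (S ∩ Set.Iio m) := by
  induction hx using closure_induction with
  | mem s hs => exact subset_closure ⟨hs, hxm⟩
  | zero => exact zero_mem _
  | add x y _ _ ihx ihy =>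
    exact add_mem (ihx (lt_of_le_of_lt le_self_add hxm))
      (ihy (lt_of_le_of_lt le_add_self hxm))

theorem dvd_of_mem_closure {R : Type*} [NonUnitalSemiring R] {S : Set R} {n x : R}
    (hS : ∀ s ∈ S, n ∣ s) (hx : x ∈ closure S) : n ∣ x := by
  induction hx using closure_induction with
  | mem s hs => exact hS s hs
  | zero => exact dvd_zero n
  | add _ _ _ _ hx hy => exact dvd_add hx hy

end AddSubmonoid

theorem generator_dvd_of_lt {n t s : ℕ} (hn : 3 ≤ n)
    (hs : s ∈ ({t * n ^ 2, t * n ^ 2 + n, t ^ 2 * n + 1, t ^ 2 * n + n + 1,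
      t ^ 2 * n ^ 2 - t ^ 2 * n - 1} : Set ℕ)) (hlt : s < t ^ 2 * n + 1) : n ∣ s := by
  simp only [Set.mem_insert_iff, Set.mem_singleton_iff] at hs
  rcases hs with rfl | rfl | rfl | rfl | rfl
  · exact ⟨t * n, by ring⟩
  · exact ⟨t * n + 1, by ring⟩
  · omega
  · omega
  · obtain rfl | ht := Nat.eq_zero_or_pos t
    · simp
    · have h3 : 3 ≤ t ^ 2 * n := le_mul_of_one_le_of_le (Nat.one_le_pow _ _ ht) hn
      have : 3 * (t ^ 2 * n) ≤ t ^ 2 * n ^ 2 := by nlinarith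
      omega

theorem not_dvd_mul_add_one {n : ℕ} (hn : 2 ≤ n) (k : ℕ) : ¬ n ∣ k * n + 1 := by
  rw [Nat.dvd_add_right (dvd_mul_left n k), Nat.dvd_one]
  omega

theorem stmt_9_general (n t : ℕ) (hn : 3 ≤ n) :
    NumAtom (AddSubmonoid.closure
        {t * n ^ 2, t * n ^ 2 + n, t ^ 2 * n + 1, t ^ 2 * n + n + 1,
          t ^ 2 * n ^ 2 - t ^ 2 * n - 1}) (t ^ 2 * n + 1) ∧
      ¬ ∃ α β : ℕ, t ^ 2 * n + 1 = α * (t * n ^ 2) + β * (t * n ^ 2 + n) := by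
  have hsmall : ∀ x ∈ AddSubmonoid.closure
      {t * n ^ 2, t * n ^ 2 + n, t ^ 2 * n + 1, t ^ 2 * n + n + 1,
        t ^ 2 * n ^ 2 - t ^ 2 * n - 1}, x < t ^ 2 * n + 1 → n ∣ x := fun x hx hlt =>
    AddSubmonoid.dvd_of_mem_closure (fun s hs => generator_dvd_of_lt hn hs.1 hs.2)
      (AddSubmonoid.mem_closure_inter_Iio hx hlt)
  have hndvd := not_dvd_mul_add_one (by omega : 2 ≤ n) (t ^ 2)
  refine ⟨⟨AddSubmonoid.subset_closure (by simp), by positivity, ?_⟩, ?_⟩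
  · rintro ⟨b, c, hb, hc, hb0, hc0, hbc⟩
    rw [hbc] at hndvd
    exact hndvd (dvd_add (hsmall b hb (by omega)) (hsmall c hc (by omega)))
  · rintro ⟨α, β, h⟩
    exact hndvd ⟨α * (t * n) + β * (t * n + 1), by rw [h]; ring⟩

theorem stmt_9 (n t : ℕ) (hn : 3 ≤ n) (ht : n + 1 ≤ t) :
    NumAtom (AddSubmonoid.closure
        {t * n ^ 2, t * n ^ 2 + n, t ^ 2 * n + 1, t ^ 2 * n + n + 1,
          t ^ 2 * n ^ 2 - t ^ 2 * n - 1}) (t ^ 2 * n + 1) ∧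
      ¬ ∃ α β : ℕ, t ^ 2 * n + 1 = α * (t * n ^ 2) + β * (t * n ^ 2 + n) :=
  stmt_9_general n t hn
end

section
/- Let n ≥ 3 and t ≥ n+1. There are no α, β, γ ∈ ℕ with t²n+n+1 = α·tn² + β·(tn²+n) + γ·(t²n+1); hence t²n+n+1 is an atom of the submonoid of ℕ generated by tn², tn²+n, t²n+1, t²n+n+1, t²n²−t²n−1. -/
namespace AddSubmonoid

theorem mem_closure_triple_s10 {M : Type*} [AddCommMonoid M] (a b c x : M) :
    x ∈ closure ({a, b, c} : Set M) ↔ ∃ i j k : ℕ, i • a + j • b + k • c = x := by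
  rw [← Set.singleton_union, closure_union, mem_sup]
  simp_rw [mem_closure_singleton, mem_closure_pair, exists_exists_eq_and, add_assoc]
  constructor
  · rintro ⟨i, _, ⟨j, k, rfl⟩, rfl⟩
    exact ⟨i, j, k, rfl⟩
  · rintro ⟨i, j, k, rfl⟩
    exact ⟨i, _, ⟨j, k, rfl⟩, rfl⟩

theorem mem_closure_sep_le {M : Type*} [AddCommMonoid M] [PartialOrder M]
    [CanonicallyOrderedAdd M] {s : Set M} {x : M} (hx : x ∈ closure s) :
    x ∈ closure {a ∈ s | a ≤ x} := by
  induction hx using closure_induction with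
  | mem a ha => exact subset_closure ⟨ha, le_rfl⟩
  | zero => exact zero_mem _
  | add y z _ _ hy hz =>
    refine add_mem (closure_mono ?_ hy) (closure_mono ?_ hz) <;>
      exact fun a ha => ⟨ha.1, ha.2.trans (by simp)⟩

end AddSubmonoid

theorem not_exists_sq_mul_add_add_one_eq {n t : ℕ} (hn : 2 ≤ n) (ht : 1 ≤ t) :
    ¬ ∃ α β γ : ℕ, t ^ 2 * n + n + 1 =
      α * (t * n ^ 2) + β * (t * n ^ 2 + n) + γ * (t ^ 2 * n + 1) := by
  rintro ⟨α, β, γ, h⟩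
  have hn_le : n ≤ t ^ 2 * n := Nat.le_mul_of_pos_left n (by positivity)
  have hγ : γ < 2 := by
    by_contra! hγ
    have := Nat.mul_le_mul_right (t ^ 2 * n + 1) hγ
    omega
  interval_cases γ
  · have hdvd : n ∣ t ^ 2 * n + n + 1 := by
      rw [h]
      exact Dvd.intro (α * t * n + β * (t * n + 1)) (by ring)
    have := Nat.le_of_dvd one_pos ((Nat.dvd_add_right (Dvd.intro (t ^ 2 + 1) (by ring))).mp hdvd)
    omega
  · have hsum : α * (t * n ^ 2) + β * (t * n ^ 2 + n) = n := by linarith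
    have htn : n < t * n ^ 2 := by nlinarith
    rcases Nat.eq_zero_or_pos α with rfl | hα <;> rcases Nat.eq_zero_or_pos β with rfl | hβ <;>
      nlinarith

theorem stmt_10 (n t : ℕ) (hn : 3 ≤ n) (ht : n + 1 ≤ t) :
    (¬ ∃ α β γ : ℕ, t ^ 2 * n + n + 1 =
        α * (t * n ^ 2) + β * (t * n ^ 2 + n) + γ * (t ^ 2 * n + 1)) ∧
      NumAtom (AddSubmonoid.closure
        {t * n ^ 2, t * n ^ 2 + n, t ^ 2 * n + 1, t ^ 2 * n + n + 1,
          t ^ 2 * n ^ 2 - t ^ 2 * n - 1}) (t ^ 2 * n + n + 1) := by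
  have hnot_comb := not_exists_sq_mul_add_add_one_eq (n := n) (t := t) (by omega) (by omega)
  have hD_le_E : t ^ 2 * n + n + 1 ≤ t ^ 2 * n ^ 2 - t ^ 2 * n - 1 := by
    have hmul3 : t ^ 2 * n * 3 ≤ t ^ 2 * n ^ 2 := by
      rw [sq n, ← mul_assoc]
      exact Nat.mul_le_mul_left _ hn
    have hmul2 : 2 * n ≤ t ^ 2 * n := Nat.mul_le_mul_right n (by nlinarith)
    omega
  have hlt_mem : ∀ x ∈ AddSubmonoid.closure {t * n ^ 2, t * n ^ 2 + n, t ^ 2 * n + 1,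
      t ^ 2 * n + n + 1, t ^ 2 * n ^ 2 - t ^ 2 * n - 1}, x < t ^ 2 * n + n + 1 →
      x ∈ AddSubmonoid.closure {t * n ^ 2, t * n ^ 2 + n, t ^ 2 * n + 1} := by
    refine fun x hx hxD => AddSubmonoid.closure_mono ?_ (AddSubmonoid.mem_closure_sep_le hx)
    rintro a ⟨ha, hax⟩
    simp only [Set.mem_insert_iff, Set.mem_singleton_iff] at ha ⊢
    omega
  refine ⟨hnot_comb, AddSubmonoid.subset_closure (by simp), by positivity, ?_⟩
  rintro ⟨b, c, hb, hc, hb0, hc0, hbc⟩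
  have hD : t ^ 2 * n + n + 1 ∈ AddSubmonoid.closure {t * n ^ 2, t * n ^ 2 + n, t ^ 2 * n + 1} :=
    hbc ▸ add_mem (hlt_mem b hb (by omega)) (hlt_mem c hc (by omega))
  obtain ⟨α, β, γ, h⟩ := (AddSubmonoid.mem_closure_triple_s10 _ _ _ _).mp hD
  exact hnot_comb ⟨α, β, γ, by simpa only [smul_eq_mul] using h.symm⟩
end

section
/- Let n ≥ 3 and t ≥ n+1. There are no α, β, γ, δ ∈ ℕ with t²n² − t²n − 1 = α·tn² + β·(tn²+n) + γ·(t²n+1) + δ·(t²n+n+1); hence t²n²−t²n−1 is an atom of the submonoid of ℕ generated by tn², tn²+n, t²n+1, t²n+n+1, t²n²−t²n−1. -/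
namespace AddSubmonoid

variable {M : Type*} [AddCommMonoid M]

theorem mem_closure_insert_iff {S : Set M} {a x : M} :
    x ∈ closure (insert a S) ↔ ∃ k : ℕ, ∃ s ∈ closure S, k • a + s = x := by
  rw [Set.insert_eq, closure_union, mem_sup]
  simp [mem_closure_singleton]

theorem exists_eq_of_mem_closure_four {a b c d x : M} (hx : x ∈ closure {a, b, c, d}) :
    ∃ α β γ δ : ℕ, x = α • a + β • b + γ • c + δ • d := by
  rw [show ({a, b, c, d} : Set M) = {a, b} ∪ {c, d} by ext; simp; tauto,
    closure_union, mem_sup] at hx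
  obtain ⟨y, hy, z, hz, rfl⟩ := hx
  obtain ⟨α, β, rfl⟩ := (mem_closure_pair a b y).mp hy
  obtain ⟨γ, δ, rfl⟩ := (mem_closure_pair c d z).mp hz
  exact ⟨α, β, γ, δ, (add_assoc _ _ _).symm⟩

theorem numAtom_closure_insert_of_notMem {S : Set ℕ} {a : ℕ} (ha : a ≠ 0)
    (haS : a ∉ closure S) : NumAtom (closure (insert a S)) a := by
  refine ⟨subset_closure (Set.mem_insert a S), ha, ?_⟩
  rintro ⟨b, c, hb, hc, hb0, hc0, habc⟩
  obtain ⟨i, s, hs, rfl⟩ := mem_closure_insert_iff.mp hb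
  obtain ⟨j, s', hs', rfl⟩ := mem_closure_insert_iff.mp hc
  simp only [smul_eq_mul] at habc hb0 hc0
  obtain hij | hij := Nat.eq_zero_or_pos (i + j)
  · obtain ⟨rfl, rfl⟩ : i = 0 ∧ j = 0 := by omega
    exact haS (habc ▸ add_mem (by simpa using hs) (by simpa using hs'))
  · have hsum : (i + j) * a + (s + s') = a := by linarith
    have hij1 : i + j = 1 :=
      le_antisymm (Nat.le_of_mul_le_mul_right (by linarith) (Nat.pos_of_ne_zero ha)) hij
    obtain ⟨rfl, rfl⟩ : s = 0 ∧ s' = 0 := by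
      rw [hij1, one_mul] at hsum
      omega
    obtain ⟨rfl, rfl⟩ | ⟨rfl, rfl⟩ : i = 0 ∧ j = 1 ∨ i = 1 ∧ j = 0 := by omega
    · simp at hb0
    · simp at hc0

end AddSubmonoid

theorem not_exists_combination {n t : ℕ} (hn : 2 ≤ n) (ht : 1 ≤ t) :
    ¬ ∃ α β γ δ : ℕ, t ^ 2 * n ^ 2 - t ^ 2 * n - 1 =
        α * (t * n ^ 2) + β * (t * n ^ 2 + n) + γ * (t ^ 2 * n + 1) +
          δ * (t ^ 2 * n + n + 1) := by
  rintro ⟨α, β, γ, δ, h⟩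
  have hlt : t ^ 2 * n < t ^ 2 * n ^ 2 := calc
    t ^ 2 * n = t ^ 2 * n * 1 := (mul_one _).symm
    _ < t ^ 2 * n * n := mul_lt_mul_of_pos_left (by omega) (by positivity)
    _ = t ^ 2 * n ^ 2 := by ring
  have hsum : t ^ 2 * n ^ 2 = α * (t * n ^ 2) + β * (t * n ^ 2 + n) + γ * (t ^ 2 * n + 1) +
      δ * (t ^ 2 * n + n + 1) + t ^ 2 * n + 1 := by omega
  have hdvd : n ∣ γ + δ + 1 := by
    have hsplit : t ^ 2 * n ^ 2 = n * (α * t * n + β * (t * n + 1) + γ * t ^ 2 +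
        δ * (t ^ 2 + 1) + t ^ 2) + (γ + δ + 1) := by rw [hsum]; ring
    have hn2 : n ∣ t ^ 2 * n ^ 2 := ⟨t ^ 2 * n, by ring⟩
    rw [hsplit] at hn2
    exact (Nat.dvd_add_right (dvd_mul_right _ _)).mp hn2
  have hle : n ≤ γ + δ + 1 := Nat.le_of_dvd (by omega) hdvd
  have : t ^ 2 * n ^ 2 < t ^ 2 * n ^ 2 := calc
    t ^ 2 * n ^ 2 < n * (t ^ 2 * n + 1) := by nlinarith
    _ ≤ (γ + δ + 1) * (t ^ 2 * n + 1) := Nat.mul_le_mul_right _ hle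
    _ ≤ α * (t * n ^ 2) + β * (t * n ^ 2 + n) + γ * (t ^ 2 * n + 1) +
        δ * (t ^ 2 * n + n + 1) + t ^ 2 * n + 1 := by
      have : δ * (t ^ 2 * n + 1) ≤ δ * (t ^ 2 * n + n + 1) := Nat.mul_le_mul_left δ (by omega)
      rw [add_mul, add_mul, one_mul]
      omega
    _ = t ^ 2 * n ^ 2 := hsum.symm
  exact lt_irrefl _ this

theorem stmt_11 (n t : ℕ) (hn : 3 ≤ n) (ht : n + 1 ≤ t) :
    (¬ ∃ α β γ δ : ℕ, t ^ 2 * n ^ 2 - t ^ 2 * n - 1 =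
        α * (t * n ^ 2) + β * (t * n ^ 2 + n) + γ * (t ^ 2 * n + 1) +
          δ * (t ^ 2 * n + n + 1)) ∧
      NumAtom (AddSubmonoid.closure
        {t * n ^ 2, t * n ^ 2 + n, t ^ 2 * n + 1, t ^ 2 * n + n + 1,
          t ^ 2 * n ^ 2 - t ^ 2 * n - 1}) (t ^ 2 * n ^ 2 - t ^ 2 * n - 1) := by
  have hcomb := not_exists_combination (n := n) (t := t) (by omega) (by omega)
  refine ⟨hcomb, ?_⟩
  rw [show ({t * n ^ 2, t * n ^ 2 + n, t ^ 2 * n + 1, t ^ 2 * n + n + 1,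
      t ^ 2 * n ^ 2 - t ^ 2 * n - 1} : Set ℕ) = insert (t ^ 2 * n ^ 2 - t ^ 2 * n - 1)
      {t * n ^ 2, t * n ^ 2 + n, t ^ 2 * n + 1, t ^ 2 * n + n + 1} by ext; simp; tauto]
  refine AddSubmonoid.numAtom_closure_insert_of_notMem
    (fun h0 ↦ hcomb ⟨0, 0, 0, 0, by simp [h0]⟩) fun hmem ↦ hcomb ?_
  simpa only [smul_eq_mul] using AddSubmonoid.exists_eq_of_mem_closure_four hmem
end

section
/- Let n ≥ 3 and t ≥ n+1, and set T = ⟨tn², tn²+n, t²n+1, t²n+n+1, t²n²−t²n−1⟩. If α, β, γ, δ, ε ∈ ℕ satisfy α·tn² + β·(tn²+n) + γ·(t²n+1) + δ·(t²n+n+1) + ε·(t²n²−t²n−1) = t²n²+n, then (α,β,γ,δ,ε) is one of (0,0,n,0,0), (t−1,1,0,0,0), (0,0,0,1,1). Consequently the set of lengths of factorizations of t²n²+n into atoms of T is exactly {2, n, t}. -/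
/-!
Write `A = tn²`, `C = t²n + 1`, `E = t²n² - t²n - 1`; the generators are `A, A + n, C, C + n, E`
and `t²n² + n = nC = tA + n = E + C + n`. Modulo `n` the generators are `0, 0, 1, 1, -1`, so a
combination with coefficients `α, β, γ, δ, ε` satisfies `value + ε ≡ γ + δ [MOD n]`. Together
with the size relations `n < A`, `A + n < C`, `C + n < E` this pins down every representation of a
generator, so all five are atoms, and every representation of `nC`: either `ε = 1` and the rest
represents `C + n`, or `n ∣ γ + δ ≤ n`, which leaves `γ = n` or `t` summands `A`, `A + n`.
The lengths of factorizations are then the coefficient sums `n`, `t`, `2`.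
-/

open Finset

theorem exists_split_of_mem_closure {S : Set ℕ} {x : ℕ} (hx : x ∈ AddSubmonoid.closure S)
    (hx0 : x ≠ 0) (hxS : x ∉ S) :
    ∃ b c : ℕ, b ∈ AddSubmonoid.closure S ∧ c ∈ AddSubmonoid.closure S ∧ b ≠ 0 ∧ c ≠ 0 ∧
      x = b + c := by
  induction hx using AddSubmonoid.closure_induction with
  | mem y hy => exact absurd hy hxS
  | zero => exact absurd rfl hx0
  | add y z hy hz ihy ihz =>
    rcases eq_or_ne y 0 with rfl | hy0
    · simpa using ihz (by simpa using hx0) (by simpa using hxS)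
    rcases eq_or_ne z 0 with rfl | hz0
    · simpa using ihy (by simpa using hx0) (by simpa using hxS)
    exact ⟨y, z, hy, hz, hy0, hz0, rfl⟩

theorem NumAtom.mem_of_closure_s12 {S : Set ℕ} {a : ℕ} (h : NumAtom (AddSubmonoid.closure S) a) :
    a ∈ S :=
  by_contra fun haS => h.2.2 (exists_split_of_mem_closure h.1 h.2.1 haS)

theorem numAtom_closure_range {ι : Type*} [Fintype ι] {g : ι → ℕ} {j : ι} (hj : g j ≠ 0)
    (h : ∀ f : ι → ℕ, ∑ i, f i * g i = g j → ∑ i, f i = 1) :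
    NumAtom (AddSubmonoid.closure (Set.range g)) (g j) := by
  refine ⟨AddSubmonoid.subset_closure ⟨j, rfl⟩, hj, ?_⟩
  rintro ⟨b, c, hb, hc, hb0, hc0, hbc⟩
  obtain ⟨f₁, rfl⟩ := AddSubmonoid.mem_closure_range_iff_of_fintype.1 hb
  obtain ⟨f₂, rfl⟩ := AddSubmonoid.mem_closure_range_iff_of_fintype.1 hc
  have hsum := h (f₁ + f₂) (by simpa [add_mul, sum_add_distrib] using hbc.symm)
  have hpos : ∀ f : ι → ℕ, ∑ i, f i • g i ≠ 0 → ∑ i, f i ≠ 0 := fun f hf h0 =>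
    hf (sum_eq_zero fun i _ => by simp [(sum_eq_zero_iff.1 h0) i (mem_univ i)])
  rw [Pi.add_def, sum_add_distrib] at hsum
  have := hpos f₁ hb0
  have := hpos f₂ hc0
  omega

theorem Multiset.exists_coeffs_of_forall_mem_range {M ι : Type*} [AddCommMonoid M] [Fintype ι]
    {g : ι → M} {s : Multiset M} (hs : ∀ a ∈ s, a ∈ Set.range g) :
    ∃ f : ι → ℕ, ∑ i, f i = card s ∧ ∑ i, f i • g i = s.sum := by
  classical
  induction s using Multiset.induction_on with
  | empty => exact ⟨0, by simp, by simp⟩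
  | cons a s ih =>
    obtain ⟨f, hcard, hsum⟩ := ih fun b hb => hs b (mem_cons_of_mem hb)
    obtain ⟨j, rfl⟩ := hs _ (mem_cons_self _ _)
    refine ⟨f + Pi.single j 1, ?_, ?_⟩
    · simp [sum_add_distrib, hcard]
    · simp [sum_add_distrib, add_smul, Pi.single_apply, hsum, add_comm]

theorem AS_closure_range {ι : Type*} [Fintype ι] {g : ι → ℕ}
    (hg : ∀ i, NumAtom (AddSubmonoid.closure (Set.range g)) (g i)) (x : ℕ) :
    AS (AddSubmonoid.closure (Set.range g)) x =
      {m | ∃ f : ι → ℕ, ∑ i, f i = m ∧ ∑ i, f i * g i = x} := by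
  ext m
  constructor
  · rintro ⟨s, hs, rfl, rfl⟩
    obtain ⟨f, hcard, hsum⟩ :=
      Multiset.exists_coeffs_of_forall_mem_range fun a ha => (hs a ha).mem_of_closure_s12
    exact ⟨f, hcard, by simpa using hsum⟩
  · rintro ⟨f, rfl, rfl⟩
    refine ⟨∑ i, Multiset.replicate (f i) (g i), fun a ha => ?_, by simp [Multiset.card_sum],
      by simp [Multiset.sum_sum]⟩
    obtain ⟨i, -, hi⟩ := Multiset.mem_sum.1 ha
    rw [Multiset.eq_of_mem_replicate hi]
    exact hg i

theorem Nat.le_of_mul_le_of_lt_succ_mul {k a x m : ℕ} (hle : k * a ≤ x) (hlt : x < (m + 1) * a) :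
    k ≤ m :=
  Nat.lt_succ_iff.1 (Nat.lt_of_mul_lt_mul_right (hle.trans_lt hlt))

theorem Nat.eq_zero_of_mul_le_of_lt {k a x : ℕ} (hle : k * a ≤ x) (hlt : x < a) : k = 0 :=
  Nat.le_zero.1 (Nat.le_of_mul_le_of_lt_succ_mul hle (by simpa using hlt))

theorem Nat.eq_one_of_modEq_one {k n : ℕ} (hn : 2 ≤ n) (hk : k ≤ 1) (h : k ≡ 1 [MOD n]) :
    k = 1 := by
  interval_cases k
  · simp [Nat.ModEq, Nat.mod_eq_of_lt (show 1 < n by omega)] at h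
  · rfl

theorem Nat.eq_sub_one_and_eq_one_of_mul_add_mul_eq {n t A α β : ℕ} (hn : 0 < n) (hnA : n < A)
    (htA : t * n ≤ A) (h : α * A + β * (A + n) = t * A + n) : α = t - 1 ∧ β = 1 := by
  have e : (α + β) * A + β * n = t * A + n := by rw [← h]; ring
  have hle : α + β ≤ t := by
    by_contra! hlt
    have : (t + 1) * A ≤ (α + β) * A := Nat.mul_le_mul_right A hlt
    rw [add_one_mul] at this
    omega
  have hge : t ≤ α + β := by
    by_contra! hlt
    have h1 : (α + β + 1) * A ≤ t * A := Nat.mul_le_mul_right A hlt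
    have h2 : β * n ≤ t * n := Nat.mul_le_mul_right n (by omega)
    rw [add_one_mul] at h1
    omega
  have hβ : β * n = 1 * n := by rw [le_antisymm hle hge] at e; omega
  obtain rfl := Nat.eq_of_mul_eq_mul_right hn hβ
  exact ⟨by omega, rfl⟩

structure GeneratorRelations (n t A C E : ℕ) : Prop where
  two_le : 2 ≤ n
  lt_A : n < A
  A_add_lt : A + n < C
  C_add_lt : C + n < E
  mul_le_A : t * n ≤ A
  n_mul_C_eq_add_E : n * C = E + C + n
  n_mul_C_eq_mul_A : n * C = t * A + n
  A_modEq : A ≡ 0 [MOD n]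
  C_modEq : C ≡ 1 [MOD n]
  E_add_one_modEq : E + 1 ≡ 0 [MOD n]

namespace GeneratorRelations

variable {n t A C E α β γ δ ε : ℕ}

theorem order (h : GeneratorRelations n t A C E) : 2 ≤ n ∧ n < A ∧ A + n < C ∧ C + n < E :=
  ⟨h.two_le, h.lt_A, h.A_add_lt, h.C_add_lt⟩

theorem one_le_t (h : GeneratorRelations n t A C E) : 1 ≤ t := by
  obtain ⟨hn, hA, hAC, -⟩ := h.order
  by_contra! ht
  have hC : n * C = n * 1 := by simpa [Nat.lt_one_iff.1 ht] using h.n_mul_C_eq_mul_A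
  have := Nat.eq_of_mul_eq_mul_left (by omega) hC
  omega

theorem C_add_modEq (h : GeneratorRelations n t A C E) : C + n ≡ 1 [MOD n] := by
  simpa using h.C_modEq.add (Nat.modEq_zero_iff_dvd.2 (dvd_refl n))

theorem sum_add_modEq (h : GeneratorRelations n t A C E) (α β γ δ ε : ℕ) :
    α * A + β * (A + n) + γ * C + δ * (C + n) + ε * E + ε ≡ γ + δ [MOD n] := by
  have hn : n ≡ 0 [MOD n] := Nat.modEq_zero_iff_dvd.2 dvd_rfl
  have hA := h.A_modEq
  have hC := h.C_modEq
  have hE := h.E_add_one_modEq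
  calc α * A + β * (A + n) + γ * C + δ * (C + n) + ε * E + ε
      = α * A + β * (A + n) + γ * C + δ * (C + n) + ε * (E + 1) := by ring
    _ ≡ α * 0 + β * (0 + 0) + γ * 1 + δ * (1 + 0) + ε * 0 [MOD n] := by gcongr
    _ = γ + δ := by ring

theorem coeffs_of_eq_A (h : GeneratorRelations n t A C E)
    (hx : α * A + β * (A + n) + γ * C + δ * (C + n) + ε * E = A) :
    α = 1 ∧ β = 0 ∧ γ = 0 ∧ δ = 0 ∧ ε = 0 := by
  obtain ⟨hn, hA, hAC, hCE⟩ := h.order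
  obtain rfl := Nat.eq_zero_of_mul_le_of_lt (a := A + n) (k := β) (x := A) (by omega) (by omega)
  obtain rfl := Nat.eq_zero_of_mul_le_of_lt (a := C) (k := γ) (x := A) (by omega) (by omega)
  obtain rfl := Nat.eq_zero_of_mul_le_of_lt (a := C + n) (k := δ) (x := A) (by omega) (by omega)
  obtain rfl := Nat.eq_zero_of_mul_le_of_lt (a := E) (k := ε) (x := A) (by omega) (by omega)
  exact ⟨Nat.eq_of_mul_eq_mul_right (by omega : 0 < A) (by omega), rfl, rfl, rfl, rfl⟩

theorem coeffs_of_eq_A_add (h : GeneratorRelations n t A C E)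
    (hx : α * A + β * (A + n) + γ * C + δ * (C + n) + ε * E = A + n) :
    α = 0 ∧ β = 1 ∧ γ = 0 ∧ δ = 0 ∧ ε = 0 := by
  obtain ⟨hn, hA, hAC, hCE⟩ := h.order
  obtain rfl := Nat.eq_zero_of_mul_le_of_lt (a := C) (k := γ) (x := A + n) (by omega) (by omega)
  obtain rfl :=
    Nat.eq_zero_of_mul_le_of_lt (a := C + n) (k := δ) (x := A + n) (by omega) (by omega)
  obtain rfl := Nat.eq_zero_of_mul_le_of_lt (a := E) (k := ε) (x := A + n) (by omega) (by omega)
  have : α ≤ 1 := Nat.le_of_mul_le_of_lt_succ_mul (a := A) (x := A + n) (by omega) (by omega)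
  have : β ≤ 1 :=
    Nat.le_of_mul_le_of_lt_succ_mul (a := A + n) (x := A + n) (by omega) (by omega)
  interval_cases α <;> interval_cases β <;> omega

theorem coeffs_of_eq_C (h : GeneratorRelations n t A C E)
    (hx : α * A + β * (A + n) + γ * C + δ * (C + n) + ε * E = C) :
    α = 0 ∧ β = 0 ∧ γ = 1 ∧ δ = 0 ∧ ε = 0 := by
  have hmod := h.sum_add_modEq α β γ δ ε
  rw [hx] at hmod
  obtain ⟨hn, hA, hAC, hCE⟩ := h.order
  obtain rfl := Nat.eq_zero_of_mul_le_of_lt (a := C + n) (k := δ) (x := C) (by omega) (by omega)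
  obtain rfl := Nat.eq_zero_of_mul_le_of_lt (a := E) (k := ε) (x := C) (by omega) (by omega)
  have hγ : γ ≤ 1 := Nat.le_of_mul_le_of_lt_succ_mul (a := C) (x := C) (by omega) (by omega)
  obtain rfl := Nat.eq_one_of_modEq_one hn hγ (hmod.symm.trans h.C_modEq)
  obtain rfl := Nat.eq_zero_of_mul_le_of_lt (a := A) (k := α) (x := 0) (by omega) (by omega)
  obtain rfl := Nat.eq_zero_of_mul_le_of_lt (a := A + n) (k := β) (x := 0) (by omega) (by omega)
  exact ⟨rfl, rfl, rfl, rfl, rfl⟩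

theorem coeffs_of_eq_C_add (h : GeneratorRelations n t A C E)
    (hx : α * A + β * (A + n) + γ * C + δ * (C + n) + ε * E = C + n) :
    α = 0 ∧ β = 0 ∧ γ = 0 ∧ δ = 1 ∧ ε = 0 := by
  have hmod := h.sum_add_modEq α β γ δ ε
  rw [hx] at hmod
  have hx' : α * A + β * (A + n) + (γ + δ) * C + δ * n + ε * E = C + n := Eq.trans (by ring) hx
  obtain ⟨hn, hA, hAC, hCE⟩ := h.order
  obtain rfl := Nat.eq_zero_of_mul_le_of_lt (a := E) (k := ε) (x := C + n) (by omega) (by omega)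
  have hK : γ + δ ≤ 1 :=
    Nat.le_of_mul_le_of_lt_succ_mul (a := C) (x := C + n) (by omega) (by omega)
  have hK1 := Nat.eq_one_of_modEq_one hn hK (hmod.symm.trans h.C_add_modEq)
  rw [hK1, one_mul] at hx'
  obtain rfl := Nat.eq_zero_of_mul_le_of_lt (a := A) (k := α) (x := n) (by omega) (by omega)
  obtain rfl := Nat.eq_zero_of_mul_le_of_lt (a := A + n) (k := β) (x := n) (by omega) (by omega)
  obtain ⟨rfl, rfl⟩ | ⟨rfl, rfl⟩ : (γ = 1 ∧ δ = 0) ∨ (γ = 0 ∧ δ = 1) := by omega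
  all_goals omega

theorem coeffs_of_eq_E (h : GeneratorRelations n t A C E)
    (hx : α * A + β * (A + n) + γ * C + δ * (C + n) + ε * E = E) :
    α = 0 ∧ β = 0 ∧ γ = 0 ∧ δ = 0 ∧ ε = 1 := by
  have hmod := h.sum_add_modEq α β γ δ ε
  rw [hx] at hmod
  have hx' : α * A + β * (A + n) + (γ + δ) * C + δ * n + ε * E = E := Eq.trans (by ring) hx
  obtain ⟨hn, hA, hAC, hCE⟩ := h.order
  have := h.n_mul_C_eq_add_E
  have hε : ε ≤ 1 := Nat.le_of_mul_le_of_lt_succ_mul (a := E) (x := E) (by omega) (by omega)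
  interval_cases ε
  · exfalso
    have hdvd : n ∣ γ + δ + 1 :=
      Nat.modEq_zero_iff_dvd.1 ((hmod.symm.add_right 1).trans h.E_add_one_modEq)
    have hlt : (γ + δ + 1) * C < n * C := by rw [add_one_mul]; omega
    have := Nat.le_of_dvd (Nat.succ_pos _) hdvd
    have := Nat.lt_of_mul_lt_mul_right hlt
    omega
  · obtain rfl := Nat.eq_zero_of_mul_le_of_lt (a := A) (k := α) (x := 0) (by omega) (by omega)
    obtain rfl :=
      Nat.eq_zero_of_mul_le_of_lt (a := A + n) (k := β) (x := 0) (by omega) (by omega)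
    obtain rfl := Nat.eq_zero_of_mul_le_of_lt (a := C) (k := γ) (x := 0) (by omega) (by omega)
    obtain rfl :=
      Nat.eq_zero_of_mul_le_of_lt (a := C + n) (k := δ) (x := 0) (by omega) (by omega)
    exact ⟨rfl, rfl, rfl, rfl, rfl⟩

theorem coeffs_of_eq_n_mul_C (h : GeneratorRelations n t A C E)
    (hx : α * A + β * (A + n) + γ * C + δ * (C + n) + ε * E = n * C) :
    (α, β, γ, δ, ε) = (0, 0, n, 0, 0) ∨ (α, β, γ, δ, ε) = (t - 1, 1, 0, 0, 0) ∨
      (α, β, γ, δ, ε) = (0, 0, 0, 1, 1) := by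
  have hmod := h.sum_add_modEq α β γ δ ε
  rw [hx] at hmod
  have hx' : α * A + β * (A + n) + (γ + δ) * C + δ * n + ε * E = n * C := Eq.trans (by ring) hx
  obtain ⟨hn, hA, hAC, hCE⟩ := h.order
  have := h.n_mul_C_eq_add_E
  have hε : ε ≤ 1 :=
    Nat.le_of_mul_le_of_lt_succ_mul (a := E) (x := n * C) (by omega) (by omega)
  interval_cases ε
  · obtain ⟨j, hj⟩ : n ∣ γ + δ := Nat.modEq_zero_iff_dvd.1
      (hmod.symm.trans (Nat.modEq_zero_iff_dvd.2 (dvd_mul_right n C)))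
    have hK : γ + δ ≤ n := Nat.le_of_mul_le_mul_right (c := C) (by omega) (by omega)
    have : j ≤ 1 := Nat.le_of_mul_le_mul_left (c := n) (by omega) (by omega)
    interval_cases j
    · obtain ⟨rfl, rfl⟩ : γ = 0 ∧ δ = 0 := by omega
      right; left
      have := Nat.eq_sub_one_and_eq_one_of_mul_add_mul_eq (α := α) (β := β) (by omega) hA
        h.mul_le_A (by rw [← h.n_mul_C_eq_mul_A]; omega)
      obtain ⟨rfl, rfl⟩ := this
      rfl
    · rw [hj, mul_one] at hx'
      obtain rfl := Nat.eq_zero_of_mul_le_of_lt (a := A) (k := α) (x := 0) (by omega) (by omega)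
      obtain rfl :=
        Nat.eq_zero_of_mul_le_of_lt (a := A + n) (k := β) (x := 0) (by omega) (by omega)
      obtain rfl := Nat.eq_zero_of_mul_le_of_lt (a := n) (k := δ) (x := 0) (by omega) (by omega)
      obtain rfl : γ = n := by omega
      left; rfl
  · obtain ⟨rfl, rfl, rfl, rfl, -⟩ :=
      h.coeffs_of_eq_C_add (α := α) (β := β) (γ := γ) (δ := δ) (ε := 0) (by omega)
    right; right; rfl

theorem eq_n_mul_C_iff (h : GeneratorRelations n t A C E) :
    α * A + β * (A + n) + γ * C + δ * (C + n) + ε * E = n * C ↔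
      (α, β, γ, δ, ε) = (0, 0, n, 0, 0) ∨ (α, β, γ, δ, ε) = (t - 1, 1, 0, 0, 0) ∨
        (α, β, γ, δ, ε) = (0, 0, 0, 1, 1) := by
  refine ⟨h.coeffs_of_eq_n_mul_C, ?_⟩
  rintro (h' | h' | h') <;> simp only [Prod.mk.injEq] at h' <;>
    obtain ⟨rfl, rfl, rfl, rfl, rfl⟩ := h'
  · simp
  · obtain ⟨u, rfl⟩ := Nat.exists_eq_add_of_le' h.one_le_t
    rw [h.n_mul_C_eq_mul_A]
    simp only [Nat.add_sub_cancel]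
    ring
  · have := h.n_mul_C_eq_add_E
    omega

end GeneratorRelations

theorem generatorRelations {n t : ℕ} (hn : 3 ≤ n) (ht : n + 1 ≤ t) :
    GeneratorRelations n t (t * n ^ 2) (t ^ 2 * n + 1) (t ^ 2 * n ^ 2 - t ^ 2 * n - 1) := by
  have hsq : t ^ 2 * n ^ 2 = t ^ 2 * n * n := by ring
  have h3 : t ^ 2 * n * 3 ≤ t ^ 2 * n * n := Nat.mul_le_mul_left _ hn
  have h16 : 16 * n ≤ t ^ 2 * n := Nat.mul_le_mul_right n (by nlinarith)
  have hE : t ^ 2 * n + 1 ≤ t ^ 2 * n ^ 2 := by omega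
  have hnC : n * (t ^ 2 * n + 1) = t ^ 2 * n * n + n := by ring
  exact
    { two_le := by omega
      lt_A := by nlinarith
      A_add_lt := by nlinarith
      C_add_lt := by omega
      mul_le_A := by nlinarith
      n_mul_C_eq_add_E := by omega
      n_mul_C_eq_mul_A := by ring
      A_modEq := Nat.modEq_zero_iff_dvd.2 (Dvd.intro_left (t * n) (by ring))
      C_modEq := (Nat.modEq_zero_iff_dvd.2 (Dvd.intro_left (t ^ 2) rfl)).add_right 1
      E_add_one_modEq := by
        refine Nat.modEq_zero_iff_dvd.2 ?_
        rw [Nat.sub_add_cancel (by omega)]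
        exact Nat.dvd_sub (Dvd.intro_left (t ^ 2 * n) (by ring)) (Dvd.intro_left (t ^ 2) rfl) }

-- The fourth entry is `C + n` in the shape used by `GeneratorRelations`; the statement writes it
-- `t²n + n + 1`.
def generators (n t : ℕ) : Fin 5 → ℕ :=
  ![t * n ^ 2, t * n ^ 2 + n, t ^ 2 * n + 1, t ^ 2 * n + 1 + n, t ^ 2 * n ^ 2 - t ^ 2 * n - 1]

theorem range_generators (n t : ℕ) :
    Set.range (generators n t) = {t * n ^ 2, t * n ^ 2 + n, t ^ 2 * n + 1, t ^ 2 * n + n + 1,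
      t ^ 2 * n ^ 2 - t ^ 2 * n - 1} := by
  simp only [generators, Matrix.range_cons, Matrix.range_empty, Set.union_empty,
    Set.singleton_union, add_right_comm _ 1 n]

theorem sum_mul_generators (n t : ℕ) (f : Fin 5 → ℕ) :
    ∑ i, f i * generators n t i = f 0 * (t * n ^ 2) + f 1 * (t * n ^ 2 + n) +
      f 2 * (t ^ 2 * n + 1) + f 3 * (t ^ 2 * n + 1 + n) + f 4 * (t ^ 2 * n ^ 2 - t ^ 2 * n - 1) := by
  simp [Fin.sum_univ_five, generators]

theorem numAtom_generators {n t : ℕ} (hn : 3 ≤ n) (ht : n + 1 ≤ t) (j : Fin 5) :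
    NumAtom (AddSubmonoid.closure (Set.range (generators n t))) (generators n t j) := by
  have h := generatorRelations hn ht
  obtain ⟨-, hA, hAC, hCE⟩ := h.order
  refine numAtom_closure_range (by fin_cases j <;> simp [generators] <;> omega) fun f hf => ?_
  rw [sum_mul_generators] at hf
  rw [Fin.sum_univ_five]
  fin_cases j <;> simp only [generators, Fin.isValue, Fin.zero_eta, Fin.mk_one, Fin.reduceFinMk,
    Matrix.cons_val] at hf
  · have := h.coeffs_of_eq_A hf
    omega
  · have := h.coeffs_of_eq_A_add hf
    omega
  · have := h.coeffs_of_eq_C hf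
    omega
  · have := h.coeffs_of_eq_C_add hf
    omega
  · have := h.coeffs_of_eq_E hf
    omega

theorem stmt_12 (n t : ℕ) (hn : 3 ≤ n) (ht : n + 1 ≤ t) :
    (∀ α β γ δ ε : ℕ,
      α * (t * n ^ 2) + β * (t * n ^ 2 + n) + γ * (t ^ 2 * n + 1) +
          δ * (t ^ 2 * n + n + 1) + ε * (t ^ 2 * n ^ 2 - t ^ 2 * n - 1) =
        t ^ 2 * n ^ 2 + n →
      (α, β, γ, δ, ε) = (0, 0, n, 0, 0) ∨ (α, β, γ, δ, ε) = (t - 1, 1, 0, 0, 0) ∨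
        (α, β, γ, δ, ε) = (0, 0, 0, 1, 1)) ∧
    AS (AddSubmonoid.closure
        {t * n ^ 2, t * n ^ 2 + n, t ^ 2 * n + 1, t ^ 2 * n + n + 1,
          t ^ 2 * n ^ 2 - t ^ 2 * n - 1}) (t ^ 2 * n ^ 2 + n) = {2, n, t} := by
  have h := generatorRelations hn ht
  have hx : t ^ 2 * n ^ 2 + n = n * (t ^ 2 * n + 1) := by ring
  refine ⟨fun α β γ δ ε hα => h.coeffs_of_eq_n_mul_C (by linear_combination hα + hx), ?_⟩
  rw [← range_generators, AS_closure_range (numAtom_generators hn ht), hx]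
  ext m
  simp only [Set.mem_ofPred_eq, sum_mul_generators, h.eq_n_mul_C_iff, Set.mem_insert_iff,
    Set.mem_singleton_iff]
  simp only [Fin.sum_univ_five]
  constructor
  · rintro ⟨f, rfl, hf | hf | hf⟩ <;> simp only [Prod.mk.injEq] at hf <;> omega
  · rintro (hm | hm | hm)
    · exact ⟨![0, 0, 0, 1, 1], by simp [hm]⟩
    · exact ⟨![0, 0, n, 0, 0], by simp [hm]⟩
    · exact ⟨![t - 1, 1, 0, 0, 0], by simp [hm]; omega⟩
end

section
/- Let n ≥ 3 and t ≥ n+1. Then T'' = ⟨tn², tn²+n, t²n+1⟩ is a numerical semigroup (the generators have gcd 1) and the set of lengths of factorizations of x = t²n²+n into atoms of T'' is exactly {n, t}. Explicitly, the only solutions in ℕ of α·tn² + β·(tn²+n) + γ·(t²n+1) = t²n²+n are (α,β,γ) = (0,0,n) and (t−1,1,0). -/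
theorem finite_setOf_notMem_closure_of_setGcd_eq_one {s : Set ℕ} (h : Nat.setGcd s = 1) :
    {m | m ∉ AddSubmonoid.closure s}.Finite := by
  obtain ⟨N, hN⟩ := Nat.exists_mem_closure_of_ge s
  refine (Set.finite_lt_nat N).subset fun m hm ↦ ?_
  by_contra hge
  exact hm (hN m (not_lt.mp hge) (h ▸ one_dvd m))

theorem le_of_mem_closure {s : Set ℕ} {b x : ℕ} (hb : ∀ y ∈ s, b ≤ y)
    (hx : x ∈ AddSubmonoid.closure s) (hx0 : x ≠ 0) : b ≤ x := by
  suffices x = 0 ∨ b ≤ x by omega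
  induction hx using AddSubmonoid.closure_induction with
  | mem y hy => exact .inr (hb y hy)
  | zero => exact .inl rfl
  | add y z _ _ hy hz => omega

theorem numAtom_of_lt_two_mul {T : AddSubmonoid ℕ} {b x : ℕ} (hb : ∀ y ∈ T, y ≠ 0 → b ≤ y)
    (hx : x ∈ T) (hx0 : x ≠ 0) (hlt : x < 2 * b) : NumAtom T x := by
  refine ⟨hx, hx0, ?_⟩
  rintro ⟨y, z, hy, hz, hy0, hz0, rfl⟩
  have := hb y hy hy0
  have := hb z hz hz0
  omega

theorem mem_closure_of_mem_closure_insert_of_lt {s : Set ℕ} {c x : ℕ}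
    (hx : x ∈ AddSubmonoid.closure (insert c s)) (hlt : x < c) : x ∈ AddSubmonoid.closure s := by
  rw [Set.insert_eq, AddSubmonoid.closure_union, AddSubmonoid.mem_sup] at hx
  obtain ⟨y, hy, z, hz, rfl⟩ := hx
  obtain ⟨k, rfl⟩ := AddSubmonoid.mem_closure_singleton.mp hy
  obtain rfl : k = 0 := by
    by_contra hk
    have : c ≤ k • c := Nat.le_mul_of_pos_left c (Nat.pos_of_ne_zero hk)
    omega
  simpa using hz

theorem numAtom_closure_insert_of_not_dvd {s : Set ℕ} {c d : ℕ} (hs : ∀ y ∈ s, d ∣ y)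
    (hc : ¬ d ∣ c) : NumAtom (AddSubmonoid.closure (insert c s)) c := by
  have hd {x : ℕ} (hx : x ∈ AddSubmonoid.closure (insert c s)) (hlt : x < c) : d ∣ x :=
    (Nat.dvd_setGcd_iff.mpr hs).trans
      (Nat.setGcd_dvd_of_mem_closure (mem_closure_of_mem_closure_insert_of_lt hx hlt))
  refine ⟨AddSubmonoid.subset_closure (Set.mem_insert c s), fun h ↦ hc (h ▸ dvd_zero d), ?_⟩
  rintro ⟨x, y, hx, hy, hx0, hy0, rfl⟩
  exact hc (dvd_add (hd hx (by omega)) (hd hy (by omega)))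

theorem mem_of_numAtom_closure_s13 {s : Set ℕ} {x : ℕ} (h : NumAtom (AddSubmonoid.closure s) x) :
    x ∈ s := by
  obtain ⟨hx, hx0, hirr⟩ := h
  have hcases : x = 0 ∨ x ∈ s ∨ ∃ y z : ℕ, y ∈ AddSubmonoid.closure s ∧
      z ∈ AddSubmonoid.closure s ∧ y ≠ 0 ∧ z ≠ 0 ∧ x = y + z := by
    clear hx0 hirr
    induction hx using AddSubmonoid.closure_induction with
    | mem y hy => exact .inr (.inl hy)
    | zero => exact .inl rfl
    | add y z hy hz ihy ihz =>
      rcases eq_or_ne y 0 with rfl | hy0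
      · simpa using ihz
      rcases eq_or_ne z 0 with rfl | hz0
      · simpa using ihy
      exact .inr (.inr ⟨y, z, hy, hz, hy0, hz0, rfl⟩)
  rcases hcases with h | h | h
  exacts [absurd h hx0, h, absurd h hirr]

theorem Multiset.exists_card_eq_and_sum_eq {a b c : ℕ} {s : Multiset ℕ}
    (hs : ∀ y ∈ s, y = a ∨ y = b ∨ y = c) :
    ∃ α β γ : ℕ, card s = α + β + γ ∧ s.sum = α * a + β * b + γ * c := by
  induction s using Multiset.induction_on with
  | empty => exact ⟨0, 0, 0, by simp⟩
  | cons y s ih =>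
    obtain ⟨α, β, γ, hcard, hsum⟩ := ih fun z hz ↦ hs z (mem_cons_of_mem hz)
    rcases hs y (mem_cons_self y s) with rfl | rfl | rfl
    · exact ⟨α + 1, β, γ, by rw [card_cons, hcard]; ring, by rw [sum_cons, hsum]; ring⟩
    · exact ⟨α, β + 1, γ, by rw [card_cons, hcard]; ring, by rw [sum_cons, hsum]; ring⟩
    · exact ⟨α, β, γ + 1, by rw [card_cons, hcard]; ring, by rw [sum_cons, hsum]; ring⟩

theorem AS_eq_setOf_of_numAtom_iff {T : AddSubmonoid ℕ} {a b c : ℕ}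
    (hT : ∀ y, NumAtom T y ↔ y = a ∨ y = b ∨ y = c) (x : ℕ) :
    AS T x = {m | ∃ α β γ : ℕ, α * a + β * b + γ * c = x ∧ α + β + γ = m} := by
  ext m
  constructor
  · rintro ⟨s, hs, rfl, rfl⟩
    obtain ⟨α, β, γ, hcard, hsum⟩ :=
      Multiset.exists_card_eq_and_sum_eq fun y hy ↦ (hT y).mp (hs y hy)
    exact ⟨α, β, γ, hsum.symm, hcard.symm⟩
  · rintro ⟨α, β, γ, rfl, rfl⟩
    refine ⟨.replicate α a + .replicate β b + .replicate γ c, fun y hy ↦ (hT y).mpr ?_,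
      by simp, by simp [mul_comm]⟩
    simp only [Multiset.mem_add, Multiset.mem_replicate] at hy
    tauto

theorem add_eq_and_eq_one_of_add_mul_add_eq {α β t N : ℕ} (hN : 1 < N) (ht : t ≤ N)
    (h : (α + β) * N + β = t * N + 1) : α + 1 = t ∧ β = 1 := by
  rcases lt_trichotomy (α + β) t with hlt | heq | hgt
  · have := Nat.mul_le_mul_right N (Nat.succ_le_of_lt hlt)
    nlinarith
  · subst heq
    omega
  · have := Nat.mul_le_mul_right N (Nat.succ_le_of_lt hgt)
    nlinarith

section

variable {n t : ℕ}

theorem setGcd_generators_eq_one :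
    Nat.setGcd {t * n ^ 2, t * n ^ 2 + n, t ^ 2 * n + 1} = 1 := by
  have hcop : Nat.Coprime (t * n) (t ^ 2 * n + 1) := by
    rw [show t ^ 2 * n + 1 = t * (t * n) + 1 by ring, Nat.coprime_mul_right_add_right]
    exact Nat.coprime_one_right _
  have hcop' : Nat.Coprime (t * n ^ 2) (t ^ 2 * n + 1) :=
    (hcop.pow_left 2).coprime_dvd_left ⟨t, by ring⟩
  exact Nat.eq_one_of_dvd_coprimes hcop' (Nat.setGcd_dvd_of_mem (by simp))
    (Nat.setGcd_dvd_of_mem (by simp))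

theorem eq_zero_or_eq_of_mul_add_mul_add_mul_eq {α β γ : ℕ}
    (h : α * (t * n ^ 2) + β * (t * n ^ 2 + n) + γ * (t ^ 2 * n + 1) = t ^ 2 * n ^ 2 + n) :
    γ = 0 ∨ γ = n := by
  have hc : t ^ 2 * n ^ 2 + n = n * (t ^ 2 * n + 1) := by ring
  have hle : γ ≤ n :=
    Nat.le_of_mul_le_mul_right (hc ▸ h ▸ Nat.le_add_left _ _) (Nat.succ_pos (t ^ 2 * n))
  have hdvd : n ∣ γ := by
    have hcop : Nat.Coprime n (t ^ 2 * n + 1) := by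
      rw [Nat.coprime_mul_right_add_right]
      exact Nat.coprime_one_right n
    have hab : n ∣ α * (t * n ^ 2) + β * (t * n ^ 2 + n) :=
      ⟨α * (t * n) + β * (t * n + 1), by ring⟩
    have hx : n ∣ t ^ 2 * n ^ 2 + n := ⟨t ^ 2 * n + 1, by ring⟩
    exact hcop.dvd_of_dvd_mul_right ((Nat.dvd_add_right hab).mp (h ▸ hx))
  obtain ⟨k, rfl⟩ := hdvd
  rcases Nat.eq_zero_or_pos k with rfl | hk
  · exact .inl (mul_zero n)
  · exact .inr (le_antisymm hle (Nat.le_mul_of_pos_right n hk))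

theorem mul_add_mul_add_mul_eq_iff (hn : 2 ≤ n) (ht : 0 < t) (α β γ : ℕ) :
    α * (t * n ^ 2) + β * (t * n ^ 2 + n) + γ * (t ^ 2 * n + 1) = t ^ 2 * n ^ 2 + n ↔
      (α, β, γ) = (0, 0, n) ∨ (α, β, γ) = (t - 1, 1, 0) := by
  refine ⟨fun h ↦ ?_, ?_⟩
  · rcases eq_zero_or_eq_of_mul_add_mul_add_mul_eq h with rfl | hγ
    · have hdiv : (α + β) * (t * n) + β = t * (t * n) + 1 := by
        refine Nat.eq_of_mul_eq_mul_right (by omega : 0 < n) ?_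
        linear_combination h
      obtain ⟨hα, rfl⟩ := add_eq_and_eq_one_of_add_mul_add_eq (by nlinarith) (by nlinarith) hdiv
      right
      simp only [Prod.mk.injEq, and_true]
      omega
    · subst γ
      have hab : α * (t * n ^ 2) + β * (t * n ^ 2 + n) = 0 := by linear_combination h
      have ha : t * n ^ 2 ≠ 0 := (Nat.mul_pos ht (pow_pos (by omega) 2)).ne'
      obtain ⟨hα, hβ⟩ := Nat.add_eq_zero_iff.mp hab
      left
      simp only [Prod.mk.injEq, and_true]
      exact ⟨(Nat.mul_eq_zero.mp hα).resolve_right ha,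
        (Nat.mul_eq_zero.mp hβ).resolve_right (by omega)⟩
  · rintro (h | h) <;> simp only [Prod.mk.injEq] at h <;> obtain ⟨rfl, rfl, rfl⟩ := h
    · ring
    · obtain ⟨s, rfl⟩ : ∃ s, t = s + 1 := ⟨t - 1, by omega⟩
      simp only [Nat.add_sub_cancel]
      ring

theorem numAtom_closure_generators_iff (hn : 2 ≤ n) (hnt : n ≤ t) (y : ℕ) :
    NumAtom (AddSubmonoid.closure {t * n ^ 2, t * n ^ 2 + n, t ^ 2 * n + 1}) y ↔
      y = t * n ^ 2 ∨ y = t * n ^ 2 + n ∨ y = t ^ 2 * n + 1 := by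
  have ha : 0 < t * n ^ 2 := Nat.mul_pos (by omega) (pow_pos (by omega) 2)
  have hac : t * n ^ 2 ≤ t ^ 2 * n := by nlinarith [Nat.mul_le_mul_left (t * n) hnt]
  have hmin : ∀ x ∈ AddSubmonoid.closure {t * n ^ 2, t * n ^ 2 + n, t ^ 2 * n + 1}, x ≠ 0 →
      t * n ^ 2 ≤ x := by
    refine fun x hx hx0 ↦ le_of_mem_closure ?_ hx hx0
    simp only [Set.mem_insert_iff, Set.mem_singleton_iff]
    rintro y (rfl | rfl | rfl) <;> omega
  refine ⟨fun h ↦ mem_of_numAtom_closure_s13 h, ?_⟩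
  rintro (rfl | rfl | rfl)
  · exact numAtom_of_lt_two_mul hmin (AddSubmonoid.subset_closure (by simp)) ha.ne' (by omega)
  · exact numAtom_of_lt_two_mul hmin (AddSubmonoid.subset_closure (by simp)) (by omega)
      (by nlinarith)
  · have hset : ({t * n ^ 2, t * n ^ 2 + n, t ^ 2 * n + 1} : Set ℕ) =
        insert (t ^ 2 * n + 1) {t * n ^ 2, t * n ^ 2 + n} := by
      rw [Set.pair_comm, Set.insert_comm]
    rw [hset]
    refine numAtom_closure_insert_of_not_dvd (d := n) ?_ ?_
    · simp only [Set.mem_insert_iff, Set.mem_singleton_iff]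
      rintro y (rfl | rfl)
      · exact ⟨t * n, by ring⟩
      · exact ⟨t * n + 1, by ring⟩
    · rw [Nat.dvd_add_right (Dvd.intro_left (t ^ 2) rfl)]
      exact Nat.not_dvd_of_pos_of_lt one_pos hn

end

theorem stmt_13 (n t : ℕ) (hn : 3 ≤ n) (ht : n + 1 ≤ t) :
    (Set.Finite {m : ℕ | m ∉ AddSubmonoid.closure {t * n ^ 2, t * n ^ 2 + n, t ^ 2 * n + 1}}) ∧
    AS (AddSubmonoid.closure {t * n ^ 2, t * n ^ 2 + n, t ^ 2 * n + 1})
        (t ^ 2 * n ^ 2 + n) = {n, t} ∧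
    (∀ α β γ : ℕ,
      α * (t * n ^ 2) + β * (t * n ^ 2 + n) + γ * (t ^ 2 * n + 1) = t ^ 2 * n ^ 2 + n →
      (α, β, γ) = (0, 0, n) ∨ (α, β, γ) = (t - 1, 1, 0)) := by
  have hsol := mul_add_mul_add_mul_eq_iff (n := n) (t := t) (by omega) (by omega)
  refine ⟨finite_setOf_notMem_closure_of_setGcd_eq_one setGcd_generators_eq_one, ?_,
    fun α β γ ↦ (hsol α β γ).mp⟩
  rw [AS_eq_setOf_of_numAtom_iff (numAtom_closure_generators_iff (by omega) (by omega))]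
  ext m
  simp only [hsol, Prod.mk.injEq, Set.mem_ofPred_eq, Set.mem_insert_iff, Set.mem_singleton_iff]
  constructor
  · rintro ⟨α, β, γ, (⟨rfl, rfl, rfl⟩ | ⟨rfl, rfl, rfl⟩), rfl⟩ <;> omega
  · rintro (rfl | rfl)
    · exact ⟨0, 0, m, .inl ⟨rfl, rfl, rfl⟩, by omega⟩
    · exact ⟨m - 1, 1, 0, .inr ⟨rfl, rfl, rfl⟩, by omega⟩
end
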